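/- If γ ≥ 2 then Π_γ(ρ) ≥ |ρ − 1|² for all ρ > 0. -/
import Mathlib

noncomputable def bgam (γ ρ : ℝ) : ℝ := if γ = 1 then ρ * Real.log ρ else ρ ^ γ / (γ - 1)

noncomputable def Pigam (γ ρ : ℝ) : ℝ := bgam γ ρ - bgam γ 1 - deriv (bgam γ) 1 * (ρ - 1)

theorem stmt2 (γ : ℝ) (hγ : 2 ≤ γ) (ρ : ℝ) (hρ : 0 < ρ) :
    |ρ - 1| ^ 2 ≤ Pigam γ ρ := by
  have hγ1 : γ ≠ 1 := by linarith
  have hγ1' : (0:ℝ) < γ - 1 := by linarith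
  have hb : bgam γ = fun x : ℝ => x ^ γ / (γ - 1) := by
    funext x; simp [bgam, hγ1]
  have hderiv : deriv (bgam γ) 1 = γ / (γ - 1) := by
    rw [hb]
    have h1 : HasDerivAt (fun x : ℝ => x ^ γ) (γ * (1:ℝ) ^ (γ - 1)) 1 :=
      Real.hasDerivAt_rpow_const (Or.inl one_ne_zero)
    have h2 := h1.div_const (γ - 1)
    rw [h2.deriv, Real.one_rpow, mul_one]
  have key : 1 + (γ - 1) * (ρ - 1) ≤ ρ ^ (γ - 1) := by
    have := one_add_mul_self_le_rpow_one_add (s := ρ - 1) (by linarith) (p := γ - 1) (by linarith)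
    simpa using this
  have hsplit : ρ ^ γ = ρ * ρ ^ (γ - 1) := by
    rw [← Real.rpow_one_add' hρ.le (by linarith)]
    ring_nf
  have main : (γ - 1) * (ρ - 1) ^ 2 ≤ ρ ^ γ - 1 - γ * (ρ - 1) := by
    rw [hsplit]
    nlinarith [mul_le_mul_of_nonneg_left key hρ.le]
  have : |ρ - 1| ^ 2 = (ρ - 1) ^ 2 := sq_abs _
  rw [this]
  unfold Pigam
  rw [hderiv, hb]
  simp only [Real.one_rpow]
  have heq : ρ ^ γ / (γ - 1) - 1 / (γ - 1) - γ / (γ - 1) * (ρ - 1)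
      = (ρ ^ γ - 1 - γ * (ρ - 1)) / (γ - 1) := by ring
  rw [heq, le_div_iff₀ hγ1']
  nlinarith [main]
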